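/- arXiv:1610.03880 — 2 statements merged into one kernel-verified Lean document; each statement's English description precedes it below -/
import Mathlib

section
/- An ordered hypersemigroup H is intra-regular if and only if for every right ideal A and every left ideal B of H one has A ∩ B ⊆ (B*A]. -/
variable {H : Type*}

/-- Subset product induced by a hyperoperation. -/
def hprod (m : H → H → Set H) (A B : Set H) : Set H :=
  ⋃ a ∈ A, ⋃ b ∈ B, m a b

/-- Downward closure (X]. -/
def dcl [LE H] (X : Set H) : Set H := {t | ∃ x ∈ X, t ≤ x}

/-- Right ideal of an ordered hypergroupoid. -/
def IsRightIdeal [LE H] (m : H → H → Set H) (A : Set H) : Prop :=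
  A.Nonempty ∧ hprod m A Set.univ ⊆ A ∧ dcl A = A

/-- Left ideal of an ordered hypergroupoid. -/
def IsLeftIdeal [LE H] (m : H → H → Set H) (A : Set H) : Prop :=
  A.Nonempty ∧ hprod m Set.univ A ⊆ A ∧ dcl A = A

/-- (Two-sided) ideal of an ordered hypergroupoid. -/
def IsIdeal [LE H] (m : H → H → Set H) (A : Set H) : Prop :=
  A.Nonempty ∧ hprod m A Set.univ ⊆ A ∧ hprod m Set.univ A ⊆ A ∧ dcl A = A

section Aux

lemma mem_hprod' {m : H → H → Set H} {A B : Set H} {a b t : H}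
    (ha : a ∈ A) (hb : b ∈ B) (ht : t ∈ m a b) : t ∈ hprod m A B := by
  simp only [hprod, Set.mem_iUnion]; exact ⟨a, ha, b, hb, ht⟩

lemma hprod_subset_iff {m : H → H → Set H} {A B C : Set H} :
    hprod m A B ⊆ C ↔ ∀ a ∈ A, ∀ b ∈ B, m a b ⊆ C := by
  simp only [hprod, Set.iUnion_subset_iff]

lemma hprod_mono {m : H → H → Set H} {A A' B B' : Set H}
    (hA : A ⊆ A') (hB : B ⊆ B') : hprod m A B ⊆ hprod m A' B' := by
  rw [hprod_subset_iff]
  intro a ha b hb t ht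
  exact mem_hprod' (hA ha) (hB hb) ht

lemma dcl_mono [LE H] {A B : Set H} (h : A ⊆ B) : dcl A ⊆ dcl B := by
  rintro t ⟨x, hx, hle⟩; exact ⟨x, h hx, hle⟩

lemma subset_dcl [Preorder H] {A : Set H} : A ⊆ dcl A :=
  fun x hx => ⟨x, hx, le_refl x⟩

lemma dcl_dcl [Preorder H] {A : Set H} : dcl (dcl A) = dcl A := by
  apply Set.Subset.antisymm
  · rintro t ⟨x, ⟨y, hy, hxy⟩, hle⟩; exact ⟨y, hy, le_trans hle hxy⟩
  · exact subset_dcl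

lemma hprod_union_left {m : H → H → Set H} {A B C : Set H} :
    hprod m (A ∪ B) C = hprod m A C ∪ hprod m B C := by
  ext t
  simp only [hprod, Set.mem_iUnion, Set.mem_union]
  constructor
  · rintro ⟨a, ha | ha, b, hb, ht⟩
    · exact Or.inl ⟨a, ha, b, hb, ht⟩
    · exact Or.inr ⟨a, ha, b, hb, ht⟩
  · rintro (⟨a, ha, b, hb, ht⟩ | ⟨a, ha, b, hb, ht⟩)
    · exact ⟨a, Or.inl ha, b, hb, ht⟩
    · exact ⟨a, Or.inr ha, b, hb, ht⟩

lemma hprod_union_right {m : H → H → Set H} {A B C : Set H} :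
    hprod m A (B ∪ C) = hprod m A B ∪ hprod m A C := by
  ext t
  simp only [hprod, Set.mem_iUnion, Set.mem_union]
  constructor
  · rintro ⟨a, ha, b, hb | hb, ht⟩
    · exact Or.inl ⟨a, ha, b, hb, ht⟩
    · exact Or.inr ⟨a, ha, b, hb, ht⟩
  · rintro (⟨a, ha, b, hb, ht⟩ | ⟨a, ha, b, hb, ht⟩)
    · exact ⟨a, ha, b, Or.inl hb, ht⟩
    · exact ⟨a, ha, b, Or.inr hb, ht⟩

lemma dcl_union [LE H] {A B : Set H} : dcl (A ∪ B) = dcl A ∪ dcl B := by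
  ext t
  constructor
  · rintro ⟨x, hx | hx, hle⟩
    · exact Or.inl ⟨x, hx, hle⟩
    · exact Or.inr ⟨x, hx, hle⟩
  · rintro (⟨x, hx, hle⟩ | ⟨x, hx, hle⟩)
    · exact ⟨x, Or.inl hx, hle⟩
    · exact ⟨x, Or.inr hx, hle⟩

variable [PartialOrder H] {m : H → H → Set H}
    (hcomp : ∀ a b c : H, a ≤ b →
      dcl (m a c) ⊆ dcl (m b c) ∧ dcl (m c a) ⊆ dcl (m c b))

include hcomp

lemma hprod_dcl_left {A B : Set H} :
    hprod m (dcl A) B ⊆ dcl (hprod m A B) := by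
  rw [hprod_subset_iff]
  rintro a ⟨a', ha', hle⟩ b hb t ht
  have h1 : t ∈ dcl (m a' b) := (hcomp a a' b hle).1 (subset_dcl ht)
  exact dcl_mono (fun s hs => mem_hprod' ha' hb hs) h1

lemma hprod_dcl_right {A B : Set H} :
    hprod m A (dcl B) ⊆ dcl (hprod m A B) := by
  rw [hprod_subset_iff]
  rintro a ha b ⟨b', hb', hle⟩ t ht
  have h1 : t ∈ dcl (m a b') := (hcomp b b' a hle).2 (subset_dcl ht)
  exact dcl_mono (fun s hs => mem_hprod' ha hb' hs) h1

lemma hprod_dcl_both {A B : Set H} :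
    hprod m (dcl A) (dcl B) ⊆ dcl (hprod m A B) := by
  calc hprod m (dcl A) (dcl B) ⊆ dcl (hprod m A (dcl B)) := hprod_dcl_left hcomp
    _ ⊆ dcl (dcl (hprod m A B)) := dcl_mono (hprod_dcl_right hcomp)
    _ = dcl (hprod m A B) := dcl_dcl

end Aux

section Main

lemma intra_of_ideal_cond [PartialOrder H] {m : H → H → Set H}
    (hcomp : ∀ a b c : H, a ≤ b →
      dcl (m a c) ⊆ dcl (m b c) ∧ dcl (m c a) ⊆ dcl (m c b))
    (hassoc : ∀ A B C : Set H,
      hprod m (hprod m A B) C = hprod m A (hprod m B C))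
    (hyp : ∀ A B : Set H, IsRightIdeal m A → IsLeftIdeal m B →
      A ∩ B ⊆ dcl (hprod m B A))
    (a : H) :
    a ∈ dcl (hprod m (hprod m (hprod m Set.univ {a}) {a}) Set.univ) := by
  have huu : hprod m Set.univ Set.univ ⊆ (Set.univ : Set H) := Set.subset_univ _
  set T := hprod m (hprod m (hprod m Set.univ {a}) {a}) Set.univ with hT
  have hTQP : T = hprod m (hprod m Set.univ {a}) (hprod m {a} Set.univ) := by
    rw [hT]; exact hassoc _ _ _
  have hTS : T = hprod m Set.univ (hprod m {a} (hprod m {a} Set.univ)) := by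
    rw [hTQP]; exact hassoc _ _ _
  -- case subset lemmas
  have c1 : hprod m (hprod m {a} {a}) (hprod m {a} {a}) ⊆ T := by
    rw [hTS, hassoc]
    exact hprod_mono (Set.subset_univ _)
      (hprod_mono (subset_refl _) (hprod_mono (subset_refl _) (Set.subset_univ _)))
  have hSu : hprod m (hprod m {a} (hprod m {a} Set.univ)) Set.univ
      ⊆ hprod m {a} (hprod m {a} Set.univ) := by
    rw [hassoc]
    refine hprod_mono (subset_refl _) ?_
    rw [hassoc]
    exact hprod_mono (subset_refl _) huu
  have h30 : hprod m Set.univ (hprod m Set.univ {a}) ⊆ hprod m Set.univ {a} := by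
    rw [← hassoc]; exact hprod_mono huu (subset_refl _)
  have h31 : hprod m Set.univ (hprod m (hprod m Set.univ {a}) {a})
      ⊆ hprod m (hprod m Set.univ {a}) {a} := by
    rw [← hassoc]; exact hprod_mono h30 (subset_refl _)
  have c3 : hprod m (hprod m Set.univ (hprod m (hprod m Set.univ {a}) {a})) {a} ⊆ T := by
    rw [hT]; exact hprod_mono h31 (Set.subset_univ _)
  -- right ideal R(a)
  have hPP : hprod m (hprod m {a} Set.univ) Set.univ ⊆ hprod m {a} Set.univ := by
    rw [hassoc]; exact hprod_mono (subset_refl _) huu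
  have hR : IsRightIdeal m (dcl ({a} ∪ hprod m {a} Set.univ)) := by
    refine ⟨⟨a, subset_dcl (Or.inl rfl)⟩, ?_, dcl_dcl⟩
    calc hprod m (dcl ({a} ∪ hprod m {a} Set.univ)) Set.univ
        ⊆ dcl (hprod m ({a} ∪ hprod m {a} Set.univ) Set.univ) := hprod_dcl_left hcomp
      _ = dcl (hprod m {a} Set.univ ∪ hprod m (hprod m {a} Set.univ) Set.univ) := by
          rw [hprod_union_left]
      _ ⊆ dcl ({a} ∪ hprod m {a} Set.univ) :=
          dcl_mono (Set.union_subset Set.subset_union_right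
            (subset_trans hPP Set.subset_union_right))
  -- left ideal L(a)
  have hL : IsLeftIdeal m (dcl ({a} ∪ hprod m Set.univ {a})) := by
    refine ⟨⟨a, subset_dcl (Or.inl rfl)⟩, ?_, dcl_dcl⟩
    calc hprod m Set.univ (dcl ({a} ∪ hprod m Set.univ {a}))
        ⊆ dcl (hprod m Set.univ ({a} ∪ hprod m Set.univ {a})) := hprod_dcl_right hcomp
      _ = dcl (hprod m Set.univ {a} ∪ hprod m Set.univ (hprod m Set.univ {a})) := by
          rw [hprod_union_right]
      _ ⊆ dcl ({a} ∪ hprod m Set.univ {a}) :=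
          dcl_mono (Set.union_subset Set.subset_union_right
            (subset_trans h30 Set.subset_union_right))
  have key : a ∈ dcl (hprod m (dcl ({a} ∪ hprod m Set.univ {a}))
      (dcl ({a} ∪ hprod m {a} Set.univ))) :=
    hyp _ _ hR hL ⟨subset_dcl (Or.inl rfl), subset_dcl (Or.inl rfl)⟩
  have key2 : a ∈ dcl (hprod m ({a} ∪ hprod m Set.univ {a}) ({a} ∪ hprod m {a} Set.univ)) := by
    have h := dcl_mono (hprod_dcl_both hcomp) key
    rwa [dcl_dcl] at h
  rw [hprod_union_left, hprod_union_right, hprod_union_right, dcl_union, dcl_union,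
    dcl_union] at key2
  have finish : ∀ X : Set H, X ⊆ dcl T → a ∈ dcl X → a ∈ dcl T := by
    intro X hX haX
    have := dcl_mono hX haX
    rwa [dcl_dcl] at this
  rcases key2 with (h | h) | (h | h)
  · refine finish _ ?_ h
    calc hprod m {a} {a}
        ⊆ hprod m (dcl (hprod m {a} {a})) (dcl (hprod m {a} {a})) :=
          hprod_mono (Set.singleton_subset_iff.2 h) (Set.singleton_subset_iff.2 h)
      _ ⊆ dcl (hprod m (hprod m {a} {a}) (hprod m {a} {a})) := hprod_dcl_both hcomp
      _ ⊆ dcl T := dcl_mono c1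
  · refine finish _ ?_ h
    calc hprod m {a} (hprod m {a} Set.univ)
        ⊆ hprod m {a} (hprod m (dcl (hprod m {a} (hprod m {a} Set.univ))) Set.univ) :=
          hprod_mono (subset_refl _)
            (hprod_mono (Set.singleton_subset_iff.2 h) (subset_refl _))
      _ ⊆ hprod m {a} (dcl (hprod m (hprod m {a} (hprod m {a} Set.univ)) Set.univ)) :=
          hprod_mono (subset_refl _) (hprod_dcl_left hcomp)
      _ ⊆ dcl (hprod m {a} (hprod m (hprod m {a} (hprod m {a} Set.univ)) Set.univ)) :=
          hprod_dcl_right hcomp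
      _ ⊆ dcl T := by
          rw [hTS]
          exact dcl_mono (hprod_mono (Set.subset_univ _) hSu)
  · refine finish _ ?_ h
    calc hprod m (hprod m Set.univ {a}) {a}
        ⊆ hprod m (hprod m Set.univ (dcl (hprod m (hprod m Set.univ {a}) {a}))) {a} :=
          hprod_mono (hprod_mono (subset_refl _) (Set.singleton_subset_iff.2 h))
            (subset_refl _)
      _ ⊆ hprod m (dcl (hprod m Set.univ (hprod m (hprod m Set.univ {a}) {a}))) {a} :=
          hprod_mono (hprod_dcl_right hcomp) (subset_refl _)
      _ ⊆ dcl (hprod m (hprod m Set.univ (hprod m (hprod m Set.univ {a}) {a})) {a}) :=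
          hprod_dcl_left hcomp
      _ ⊆ dcl T := dcl_mono c3
  · rwa [← hTQP] at h

end Main

theorem stmt4 [PartialOrder H] (m : H → H → Set H)
    (hne : ∀ a b : H, (m a b).Nonempty)
    (hcomp : ∀ a b c : H, a ≤ b →
      dcl (m a c) ⊆ dcl (m b c) ∧ dcl (m c a) ⊆ dcl (m c b))
    (hassoc : ∀ A B C : Set H,
      hprod m (hprod m A B) C = hprod m A (hprod m B C)) :
    (∀ a : H, a ∈ dcl (hprod m (hprod m (hprod m Set.univ {a}) {a}) Set.univ)) ↔
    (∀ A B : Set H, IsRightIdeal m A → IsLeftIdeal m B →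
      A ∩ B ⊆ dcl (hprod m B A)) := by
  constructor
  · intro hintra A B hA hB t ht
    obtain ⟨htA, htB⟩ := ht
    have h1 := hintra t
    rw [hassoc] at h1
    refine dcl_mono ?_ h1
    have hQ : hprod m Set.univ {t} ⊆ B := fun x hx =>
      hB.2.1 (hprod_mono (subset_refl _) (Set.singleton_subset_iff.2 htB) hx)
    have hP : hprod m {t} Set.univ ⊆ A := fun x hx =>
      hA.2.1 (hprod_mono (Set.singleton_subset_iff.2 htA) (subset_refl _) hx)
    exact hprod_mono hQ hP
  · exact fun hyp => intra_of_ideal_cond hcomp hassoc hyp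
end

section
/- An hypersemigroup H is left quasi-regular if and only if every fuzzy left ideal f of H is idempotent, i.e. f ∘ f = f. -/
variable {H : Type*}

/-- Product of fuzzy subsets induced by the hyperoperation
(`sSup ∅ = 0` in `ℝ`, which gives the value 0 when no pair exists). -/
noncomputable def fprod (m : H → H → Set H) (f g : H → ℝ) (a : H) : ℝ :=
  sSup {r : ℝ | ∃ y z : H, a ∈ m y z ∧ r = min (f y) (g z)}

/-- Fuzzy subset: values in [0,1]. -/
def IsFuzzy (f : H → ℝ) : Prop := ∀ x : H, 0 ≤ f x ∧ f x ≤ 1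

/-- Fuzzy right ideal. -/
def IsFuzzyRightIdeal (m : H → H → Set H) (f : H → ℝ) : Prop :=
  IsFuzzy f ∧ ∀ x y u : H, u ∈ m x y → f x ≤ f u

/-- Fuzzy left ideal. -/
def IsFuzzyLeftIdeal (m : H → H → Set H) (f : H → ℝ) : Prop :=
  IsFuzzy f ∧ ∀ x y u : H, u ∈ m x y → f y ≤ f u

lemma mem_hprod {m : H → H → Set H} {A B : Set H} {u : H} :
    u ∈ hprod m A B ↔ ∃ y ∈ A, ∃ z ∈ B, u ∈ m y z := by
  simp [hprod]

theorem stmt17 (m : H → H → Set H)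
    (hne : ∀ a b : H, (m a b).Nonempty)
    (hassoc : ∀ A B C : Set H,
      hprod m (hprod m A B) C = hprod m A (hprod m B C)) :
    (∀ a : H, a ∈ hprod m (hprod m (hprod m Set.univ {a}) Set.univ) {a}) ↔
    (∀ f : H → ℝ, IsFuzzyLeftIdeal m f → fprod m f f = f) := by
  constructor
  · -- quasi-regular → every fuzzy left ideal idempotent
    intro hq f hf
    obtain ⟨hfz, hfl⟩ := hf
    funext a
    have key := hq a
    rw [hassoc (hprod m Set.univ {a}) Set.univ {a}] at key
    rw [mem_hprod] at key
    obtain ⟨s, hs, t, ht, hst⟩ := key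
    rw [mem_hprod] at hs ht
    obtain ⟨x, -, a1, ha1, hsx⟩ := hs
    obtain ⟨x', -, a2, ha2, htx⟩ := ht
    rw [Set.mem_singleton_iff] at ha1 ha2
    rw [ha1] at hsx; rw [ha2] at htx
    have hfs : f a ≤ f s := hfl _ _ _ hsx
    have hft : f a ≤ f t := hfl _ _ _ htx
    show sSup {r : ℝ | ∃ y z : H, a ∈ m y z ∧ r = min (f y) (f z)} = f a
    have hub : ∀ r ∈ {r : ℝ | ∃ y z : H, a ∈ m y z ∧ r = min (f y) (f z)},
        r ≤ f a := by
      rintro r ⟨y, z, hyz, rfl⟩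
      exact le_trans (min_le_right _ _) (hfl _ _ _ hyz)
    have hmem : f a ∈ {r : ℝ | ∃ y z : H, a ∈ m y z ∧ r = min (f y) (f z)} := by
      refine ⟨s, t, hst, ?_⟩
      have h1 : f t ≤ f a := hfl _ _ _ hst
      have : min (f s) (f t) = f a :=
        le_antisymm (le_trans (min_le_right _ _) h1) (le_min hfs hft)
      exact this.symm
    exact le_antisymm (csSup_le ⟨_, hmem⟩ hub) (le_csSup ⟨f a, hub⟩ hmem)
  · -- converse
    intro hid a
    classical
    set A : Set H := {a} ∪ hprod m Set.univ {a} with hA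
    have haA : a ∈ A := Or.inl rfl
    -- A is a left ideal
    have hHa : ∀ x y u : H, u ∈ m x y → y ∈ A → u ∈ A := by
      intro x y u hu hy
      rcases hy with hy | hy
      · rw [Set.mem_singleton_iff] at hy
        rw [hy] at hu
        exact Or.inr (mem_hprod.2 ⟨x, trivial, a, rfl, hu⟩)
      · obtain ⟨w, -, a', ha', hw⟩ := mem_hprod.1 hy
        rw [Set.mem_singleton_iff] at ha'
        rw [ha'] at hw
        have h1 : u ∈ hprod m {x} (hprod m {w} {a}) :=
          mem_hprod.2 ⟨x, rfl, y, mem_hprod.2 ⟨w, rfl, a, rfl, hw⟩, hu⟩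
        rw [← hassoc] at h1
        obtain ⟨p, -, a2, ha2, hp⟩ := mem_hprod.1 h1
        rw [Set.mem_singleton_iff] at ha2
        rw [ha2] at hp
        exact Or.inr (mem_hprod.2 ⟨p, trivial, a, rfl, hp⟩)
    set f : H → ℝ := fun x => if x ∈ A then 1 else 0 with hf
    have hfval : ∀ x, f x = 1 ∨ f x = 0 := by
      intro x
      by_cases hx : x ∈ A <;> simp [hf, hx]
    have hfone : ∀ x, f x = 1 → x ∈ A := by
      intro x hx
      by_contra h
      simp [hf, h] at hx
    have hflid : IsFuzzyLeftIdeal m f := by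
      constructor
      · intro x
        by_cases hx : x ∈ A <;> simp [hf, hx]
      · intro x y u hu
        by_cases hy : y ∈ A
        · have : u ∈ A := hHa x y u hu hy
          simp [hf, hy, this]
        · have h0 : (0:ℝ) ≤ f u := by
            rcases hfval u with h | h <;> rw [h] <;> norm_num
          have : f y = 0 := by simp [hf, hy]
          rw [this]; exact h0
    have h1 : fprod m f f a = f a := congrFun (hid f hflid) a
    have hfa : f a = 1 := by simp [hf, haA]
    rw [hfa] at h1
    set S : Set ℝ := {r : ℝ | ∃ y z : H, a ∈ m y z ∧ r = min (f y) (f z)} with hS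
    have h1S : (1:ℝ) ∈ S := by
      by_contra h1s
      have : sSup S ≤ 0 := by
        apply Real.sSup_le _ le_rfl
        rintro r ⟨y, z, hyz, rfl⟩
        rcases hfval y with hy | hy
        · rcases hfval z with hz | hz
          · exact absurd ⟨y, z, hyz, by rw [hy, hz]; simp⟩ h1s
          · rw [hz]; simp
        · rw [hy]; exact le_trans (min_le_left _ _) le_rfl
      rw [show sSup S = fprod m f f a from rfl, h1] at this
      linarith
    obtain ⟨y, z, hyz, hminv⟩ := h1S
    have hfy : f y = 1 := by
      rcases hfval y with h | h
      · exact h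
      · rw [h] at hminv
        rcases hfval z with h' | h' <;> rw [h'] at hminv <;> norm_num at hminv
    have hfz : f z = 1 := by
      rcases hfval z with h | h
      · exact h
      · rw [h, hfy] at hminv; norm_num at hminv
    have hyA : y ∈ A := hfone y hfy
    have hzA : z ∈ A := hfone z hfz
    -- first show a ∈ H∘{a}
    have haHa : a ∈ hprod m Set.univ {a} := by
      rcases hzA with hz | hz
      · rw [Set.mem_singleton_iff] at hz
        rw [hz] at hyz
        exact mem_hprod.2 ⟨y, trivial, a, rfl, hyz⟩
      · obtain ⟨w, -, a', ha', hw⟩ := mem_hprod.1 hz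
        rw [Set.mem_singleton_iff] at ha'
        rw [ha'] at hw
        have h2 : a ∈ hprod m {y} (hprod m {w} {a}) :=
          mem_hprod.2 ⟨y, rfl, z, mem_hprod.2 ⟨w, rfl, a, rfl, hw⟩, hyz⟩
        rw [← hassoc] at h2
        obtain ⟨p, -, a2, ha2, hp⟩ := mem_hprod.1 h2
        rw [Set.mem_singleton_iff] at ha2
        rw [ha2] at hp
        exact mem_hprod.2 ⟨p, trivial, a, rfl, hp⟩
    have hyHa : y ∈ hprod m Set.univ {a} := by
      rcases hyA with h | h
      · rw [Set.mem_singleton_iff] at h; subst h; exact haHa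
      · exact h
    have hzHa : z ∈ hprod m Set.univ {a} := by
      rcases hzA with h | h
      · rw [Set.mem_singleton_iff] at h; subst h; exact haHa
      · exact h
    rw [hassoc (hprod m Set.univ {a}) Set.univ {a}]
    exact mem_hprod.2 ⟨y, hyHa, z, hzHa, hyz⟩
end
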